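/- Let M = [m_{ij}] be an n×n complex Nekrasov matrix whose diagonal entries m_{ii} are real and positive. Then for every i = 1,…,n, h_i(M)/m_{ii} < 1; consequently, for any diagonal matrix D = diag(d_1,…,d_n) with 0 ≤ d_i ≤ 1 and M̃ = I − D + DM = [m̃_{ij}], one has h_i(M̃) < m̃_{ii} for every i. -/
import Mathlib


open Finset

noncomputable def nekH {n : ℕ} {𝕜 : Type*} [RCLike 𝕜] (A : Matrix (Fin n) (Fin n) 𝕜) : Fin n → ℝ
  | i =>
    (∑ j : Fin n, if h : j < i then ‖A i j‖ / ‖A j j‖ * nekH A j else 0)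
      + ∑ j : Fin n, if i < j then ‖A i j‖ else 0
termination_by i => i.val
decreasing_by exact h

def IsNekrasov {n : ℕ} {𝕜 : Type*} [RCLike 𝕜] (A : Matrix (Fin n) (Fin n) 𝕜) : Prop :=
  ∀ i, nekH A i < ‖A i i‖

noncomputable def nekZ {n : ℕ} {𝕜 : Type*} [RCLike 𝕜] (A : Matrix (Fin n) (Fin n) 𝕜) : Fin n → ℝ
  | i => (∑ j : Fin n, if h : j < i then ‖A i j‖ / ‖A j j‖ * nekZ A j else 0) + 1
termination_by i => i.val
decreasing_by exact h

noncomputable def nekEta {n : ℕ} {𝕜 : Type*} [RCLike 𝕜] (M : Matrix (Fin n) (Fin n) 𝕜) : Fin n → ℝ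
  | i => (∑ j : Fin n, if h : j < i then ‖M i j‖ / min ‖M j j‖ 1 * nekEta M j else 0) + 1
termination_by i => i.val
decreasing_by exact h

noncomputable def linftyNorm {n : ℕ} {𝕜 : Type*} [RCLike 𝕜] (A : Matrix (Fin n) (Fin n) 𝕜) : ℝ :=
  ⨆ i, ∑ j, ‖A i j‖

noncomputable def rPlus {n : ℕ} (M : Matrix (Fin n) (Fin n) ℝ) (i : Fin n) : ℝ :=
  Finset.fold max 0 (fun j => M i j) (Finset.univ.erase i)

noncomputable def BPlus {n : ℕ} (M : Matrix (Fin n) (Fin n) ℝ) : Matrix (Fin n) (Fin n) ℝ :=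
  Matrix.of fun i j => M i j - rPlus M i

def IsBNekrasov {n : ℕ} (M : Matrix (Fin n) (Fin n) ℝ) : Prop :=
  IsNekrasov (BPlus M) ∧ ∀ i, 0 < BPlus M i i

def IsLCPSolution {n : ℕ} (M : Matrix (Fin n) (Fin n) ℝ) (q x : Fin n → ℝ) : Prop :=
  (∀ i, 0 ≤ x i) ∧ (∀ i, 0 ≤ (M.mulVec x + q) i) ∧ ∑ i, (M.mulVec x + q) i * x i = 0

def IsPMatrix {n : ℕ} (M : Matrix (Fin n) (Fin n) ℝ) : Prop :=
  ∀ S : Finset (Fin n), 0 < (M.submatrix (fun i : S => (i : Fin n)) (fun j : S => (j : Fin n))).det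


lemma nekH_nonneg {n : ℕ} {𝕜 : Type*} [RCLike 𝕜] (A : Matrix (Fin n) (Fin n) 𝕜) :
    ∀ i, 0 ≤ nekH A i := by
  have key : ∀ N : ℕ, ∀ i : Fin n, i.val < N → 0 ≤ nekH A i := by
    intro N
    induction N with
    | zero => intro i hi; omega
    | succ N IH =>
      intro i hi
      rw [nekH]
      apply add_nonneg
      · apply Finset.sum_nonneg
        intro j _
        split
        · next h =>
          exact mul_nonneg (div_nonneg (norm_nonneg _) (norm_nonneg _)) (IH j (by omega))
        · exact le_refl 0
      · apply Finset.sum_nonneg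
        intro j _
        split <;> simp [norm_nonneg]
  intro i
  exact key (i.val + 1) i (by omega)

theorem stmt19 {n : ℕ} (M : Matrix (Fin n) (Fin n) ℂ)
    (hdiag : ∀ i, (M i i).im = 0 ∧ 0 < (M i i).re)
    (hNek : IsNekrasov M) :
    (∀ i, nekH M i / (M i i).re < 1) ∧
      ∀ d : Fin n → ℝ, (∀ i, 0 ≤ d i ∧ d i ≤ 1) →
        ∀ i, nekH (1 - Matrix.diagonal (fun k => (d k : ℂ)) + Matrix.diagonal (fun k => (d k : ℂ)) * M) i < ((1 - Matrix.diagonal (fun k => (d k : ℂ)) + Matrix.diagonal (fun k => (d k : ℂ)) * M) i i).re := by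
  have hMdiag : ∀ i, M i i = ((M i i).re : ℂ) := by
    intro i
    exact Complex.ext_iff.mpr ⟨by rw [Complex.ofReal_re], by rw [Complex.ofReal_im]; exact (hdiag i).1⟩
  have hnorm : ∀ i, ‖M i i‖ = (M i i).re := by
    intro i
    conv_lhs => rw [hMdiag i]
    rw [Complex.norm_real, Real.norm_eq_abs, abs_of_pos (hdiag i).2]
  constructor
  · intro i
    rw [div_lt_one (hdiag i).2, ← hnorm i]
    exact hNek i
  · intro d hd
    set Mt := 1 - Matrix.diagonal (fun k => (d k : ℂ)) + Matrix.diagonal (fun k => (d k : ℂ)) * M with hMt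
    have hoff : ∀ i j : Fin n, i ≠ j → Mt i j = (d i : ℂ) * M i j := by
      intro i j hij
      simp [hMt, Matrix.sub_apply, Matrix.add_apply, Matrix.one_apply_ne hij,
        Matrix.diagonal_apply_ne _ hij, Matrix.diagonal_mul]
    have hoffn : ∀ i j : Fin n, i ≠ j → ‖Mt i j‖ = d i * ‖M i j‖ := by
      intro i j hij
      rw [hoff i j hij, norm_mul, Complex.norm_real, Real.norm_eq_abs,
        abs_of_nonneg (hd i).1]
    have hdd : ∀ i : Fin n, Mt i i = ((1 - d i + d i * (M i i).re : ℝ) : ℂ) := by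
      intro i
      simp only [hMt, Matrix.add_apply, Matrix.sub_apply, Matrix.one_apply_eq,
        Matrix.diagonal_apply_eq, Matrix.diagonal_mul]
      nth_rewrite 1 [hMdiag i]
      push_cast
      ring
    have htpos : ∀ i : Fin n, 0 < 1 - d i + d i * (M i i).re := by
      intro i
      rcases lt_or_eq_of_le (hd i).2 with h | h
      · have : 0 ≤ d i * (M i i).re := mul_nonneg (hd i).1 (hdiag i).2.le
        linarith
      · rw [h]; simpa using (hdiag i).2
    have hnormt : ∀ i : Fin n, ‖Mt i i‖ = 1 - d i + d i * (M i i).re := by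
      intro i
      rw [hdd i, Complex.norm_real, Real.norm_eq_abs, abs_of_pos (htpos i)]
    -- key inequality: nekH Mt i ≤ d i * nekH M i
    have key : ∀ N : ℕ, ∀ i : Fin n, i.val < N → nekH Mt i ≤ d i * nekH M i := by
      intro N
      induction N with
      | zero => intro i hi; omega
      | succ N IH =>
        intro i hi
        rw [nekH]
        conv_rhs => rw [nekH]
        rw [mul_add, Finset.mul_sum, Finset.mul_sum]
        apply add_le_add
        · apply Finset.sum_le_sum
          intro j _
          split
          · next h =>
            have hij' : i ≠ j := fun e => absurd (e ▸ h) (lt_irrefl i)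
            have h1 : nekH Mt j ≤ d j * nekH M j := IH j (by have := Fin.lt_iff_val_lt_val.mp h; omega)
            have hMjj : 0 < ‖M j j‖ := by rw [hnorm j]; exact (hdiag j).2
            have hMtjj : 0 < ‖Mt j j‖ := by rw [hnormt j]; exact htpos j
            have hHM : 0 ≤ nekH M j := nekH_nonneg M j
            rw [hoffn i j hij']
            -- goal : d i * ‖M i j‖ / ‖Mt j j‖ * nekH Mt j ≤ d i * (‖M i j‖ / ‖M j j‖ * nekH M j)
            have hratio : nekH Mt j / ‖Mt j j‖ ≤ nekH M j / ‖M j j‖ := by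
              have h2 : d j * nekH M j / ‖Mt j j‖ ≤ nekH M j / ‖M j j‖ := by
                rw [div_le_div_iff₀ hMtjj hMjj]
                have : d j * ‖M j j‖ ≤ ‖Mt j j‖ := by
                  rw [hnorm j, hnormt j]
                  linarith [(hd j).2]
                calc d j * nekH M j * ‖M j j‖ = nekH M j * (d j * ‖M j j‖) := by ring
                    _ ≤ nekH M j * ‖Mt j j‖ := by
                        exact mul_le_mul_of_nonneg_left this hHM
              have step1 : nekH Mt j / ‖Mt j j‖ ≤ d j * nekH M j / ‖Mt j j‖ := by
                gcongr
              exact step1.trans h2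
            calc d i * ‖M i j‖ / ‖Mt j j‖ * nekH Mt j
                = (d i * ‖M i j‖) * (nekH Mt j / ‖Mt j j‖) := by ring
              _ ≤ (d i * ‖M i j‖) * (nekH M j / ‖M j j‖) := by
                  exact mul_le_mul_of_nonneg_left hratio
                    (mul_nonneg (hd i).1 (norm_nonneg _))
              _ = d i * (‖M i j‖ / ‖M j j‖ * nekH M j) := by ring
          · simp
        · apply Finset.sum_le_sum
          intro j _
          split
          · next h =>
            rw [hoffn i j (ne_of_lt h)]
          · simp
    have key' : ∀ i : Fin n, nekH Mt i ≤ d i * nekH M i := fun i => key (i.val + 1) i (by omega)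
    intro i
    have hre : (Mt i i).re = 1 - d i + d i * (M i i).re := by
      rw [hdd i]; simp
    rw [hre]
    rcases eq_or_lt_of_le (hd i).1 with h0 | h0
    · have := key' i
      rw [← h0] at this ⊢
      simp only [zero_mul] at this
      linarith
    · have h1 : nekH Mt i ≤ d i * nekH M i := key' i
      have h2 : d i * nekH M i < d i * ‖M i i‖ := by
        exact mul_lt_mul_of_pos_left (hNek i) h0
      rw [hnorm i] at h2
      linarith [(hd i).2]
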